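/- Let G be a Banach lattice with order continuous norm whose lattice order is given coordinatewise by a Schauder basis. Then for every compact set K ⊂ G and every ε > 0 there exists a positive compact operator S: G → G with S ≤ id_G, ||S||_r ≤ 1, and || |S − id_G|(x) || < ε for all x in K. -/

import Mathlib

open Filter Topology NormedSpace

/-- `dAbs f x` represents `|f|(x)` for a functional `f` on a Banach lattice,
via the Riesz–Kantorovich formula `|f|(x) = sup { f y : |y| ≤ x }` (for `x ≥ 0`). -/
noncomputable def dAbs {E : Type*} [NormedAddCommGroup E] [Lattice E] [IsOrderedAddMonoid E] [HasSolidNorm E] [NormedSpace ℝ E]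
    (f : E →L[ℝ] ℝ) (x : E) : ℝ :=
  sSup (f '' {y | |y| ≤ x})

/-- A bounded operator between Banach lattices is positive. -/
def IsPosOp {E F : Type*} [NormedAddCommGroup E] [Lattice E] [IsOrderedAddMonoid E] [HasSolidNorm E] [NormedSpace ℝ E]
    [NormedAddCommGroup F] [Lattice F] [IsOrderedAddMonoid F] [HasSolidNorm F] [NormedSpace ℝ F] (T : E →L[ℝ] F) : Prop :=
  ∀ x : E, 0 ≤ x → 0 ≤ T x

/-- The order `T ≤ S` between operators: `T x ≤ S x` for all positive `x`. -/
def OpLe {E F : Type*} [NormedAddCommGroup E] [Lattice E] [IsOrderedAddMonoid E] [HasSolidNorm E] [NormedSpace ℝ E]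
    [NormedAddCommGroup F] [Lattice F] [IsOrderedAddMonoid F] [HasSolidNorm F] [NormedSpace ℝ F] (T S : E →L[ℝ] F) : Prop :=
  ∀ x : E, 0 ≤ x → T x ≤ S x

/-- `m` is the modulus `|T|` of a regular operator `T`: the least upper bound
of `T` and `-T` in the operator order. -/
def IsModulus {E F : Type*} [NormedAddCommGroup E] [Lattice E] [IsOrderedAddMonoid E] [HasSolidNorm E] [NormedSpace ℝ E]
    [NormedAddCommGroup F] [Lattice F] [IsOrderedAddMonoid F] [HasSolidNorm F] [NormedSpace ℝ F] (T m : E →L[ℝ] F) : Prop :=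
  OpLe T m ∧ OpLe (-T) m ∧ ∀ S : E →L[ℝ] F, OpLe T S → OpLe (-T) S → OpLe m S

/-- The norm of `G` is order continuous: every downward-directed set with infimum `0`
contains elements of arbitrarily small norm. -/
def OrderContNorm (G : Type*) [NormedAddCommGroup G] [Lattice G] [IsOrderedAddMonoid G] [HasSolidNorm G] : Prop :=
  ∀ A : Set G, A.Nonempty → DirectedOn (· ≥ ·) A → IsGLB A 0 →
    ∀ ε : ℝ, 0 < ε → ∃ a ∈ A, ‖a‖ < ε

/-- The order of `G` is given coordinatewise by the Schauder basis `b` with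
coordinate functionals `c`. -/
def OrderBasis {G : Type*} [NormedAddCommGroup G] [Lattice G] [IsOrderedAddMonoid G] [HasSolidNorm G] [NormedSpace ℝ G]
    (b : ℕ → G) (c : ℕ → G →L[ℝ] ℝ) : Prop :=
  (∀ x : G, Filter.Tendsto (fun N => ∑ i ∈ Finset.range N, c i x • b i)
    Filter.atTop (nhds x)) ∧
  (∀ i j, c i (b j) = if i = j then (1 : ℝ) else 0) ∧
  (∀ x : G, 0 ≤ x ↔ ∀ n, 0 ≤ c n x)

/-!
The partial-sum operators `P_N x = ∑_{i<N} cᵢ(x) bᵢ` are of finite rank, hence compact. Since the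
order is coordinatewise, both `P_N` and `id - P_N` are positive, which gives `|P_N x| ≤ |x|` and
so `‖P_N‖ ≤ 1`. A uniformly Lipschitz family converging pointwise converges uniformly on compact
sets, so some `P_N` is `ε`-close to the identity on `K`; and as `P_N - id ≤ 0`, its modulus is
just `id - P_N`.
-/

theorem Equicontinuous.tendstoUniformlyOn_of_tendsto {ι X Y : Type*} [TopologicalSpace X]
    [UniformSpace Y] {F : ι → X → Y} {f : X → Y} {p : Filter ι} (hF : Equicontinuous F)
    (hf : ∀ x, Tendsto (F · x) p (𝓝 (f x))) {K : Set X} (hK : IsCompact K) :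
    TendstoUniformlyOn F f p K := by
  have hKF : Tendsto (UniformOnFun.ofFun {K} ∘ F) p (𝓝 (UniformOnFun.ofFun {K} f)) :=
    (EquicontinuousOn.tendsto_uniformOnFun_iff_pi' (by simpa using hK)
      (fun K _ => hF.equicontinuousOn K) p f).2 (tendsto_pi_nhds.2 fun x => hf x)
  exact UniformOnFun.tendsto_iff_tendstoUniformlyOn.1 hKF K rfl

section PositiveOperators

variable {E F : Type*} [NormedAddCommGroup E] [Lattice E] [IsOrderedAddMonoid E] [HasSolidNorm E]
  [NormedSpace ℝ E] [NormedAddCommGroup F] [Lattice F] [IsOrderedAddMonoid F] [HasSolidNorm F]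
  [NormedSpace ℝ F]

theorem isModulus_neg_of_isPosOp_neg {T : E →L[ℝ] F} (hT : IsPosOp (-T)) : IsModulus T (-T) := by
  refine ⟨fun x hx => ?_, fun _ _ => le_rfl, fun S _ hS => hS⟩
  have hTx : 0 ≤ -T x := hT x hx
  exact (neg_nonneg.1 hTx).trans hTx

theorem abs_apply_le_of_isPosOp {T : E →L[ℝ] E} (hT : IsPosOp T)
    (hT' : IsPosOp (ContinuousLinearMap.id ℝ E - T)) (x : E) : |T x| ≤ |x| := by
  have hmono : ∀ y z : E, y ≤ z → T y ≤ T z := fun y z hyz => by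
    simpa using hT (z - y) (sub_nonneg.2 hyz)
  have hle : T |x| ≤ |x| := by simpa using hT' |x| (abs_nonneg x)
  refine abs_le'.2 ⟨(hmono _ _ (le_abs_self x)).trans hle, ?_⟩
  simpa using (hmono _ _ (neg_le_abs x)).trans hle

theorem opNorm_le_one_of_isPosOp {T : E →L[ℝ] E} (hT : IsPosOp T)
    (hT' : IsPosOp (ContinuousLinearMap.id ℝ E - T)) : ‖T‖ ≤ 1 :=
  T.opNorm_le_bound zero_le_one fun x => calc
    ‖T x‖ ≤ ‖|x|‖ := norm_le_norm_of_abs_le_abs <| by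
      rw [abs_abs]; exact abs_apply_le_of_isPosOp hT hT' x
    _ = 1 * ‖x‖ := by rw [norm_abs_eq_norm, one_mul]

end PositiveOperators

section BasisProjection

variable {G : Type*} [NormedAddCommGroup G] [NormedSpace ℝ G]

noncomputable def basisProj (b : ℕ → G) (c : ℕ → G →L[ℝ] ℝ) (N : ℕ) : G →L[ℝ] G :=
  ∑ i ∈ Finset.range N, (c i).smulRight (b i)

@[simp]
theorem basisProj_apply (b : ℕ → G) (c : ℕ → G →L[ℝ] ℝ) (N : ℕ) (x : G) :
    basisProj b c N x = ∑ i ∈ Finset.range N, c i x • b i := by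
  simp [basisProj]

theorem isCompactOperator_basisProj (b : ℕ → G) (c : ℕ → G →L[ℝ] ℝ) (N : ℕ) :
    IsCompactOperator (basisProj b c N) := by
  refine (compactOperator (RingHom.id ℝ) G G).sum_mem fun i _ => ?_
  have hfactor : ⇑((c i).smulRight (b i)) = ((1 : ℝ →L[ℝ] ℝ).smulRight (b i)) ∘ c i := by
    ext x; simp
  show IsCompactOperator ((c i).smulRight (b i))
  rw [hfactor]
  exact (isCompactOperator_of_locallyCompactSpace_dom (c i)).clm_comp _

theorem coord_basisProj {b : ℕ → G} {c : ℕ → G →L[ℝ] ℝ}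
    (hbc : ∀ i j, c i (b j) = if i = j then (1 : ℝ) else 0) (N n : ℕ) (x : G) :
    c n (basisProj b c N x) = if n < N then c n x else 0 := by
  simp [hbc, Finset.sum_ite_eq]

end BasisProjection

namespace OrderBasis

variable {G : Type*} [NormedAddCommGroup G] [Lattice G] [IsOrderedAddMonoid G] [HasSolidNorm G]
  [NormedSpace ℝ G] {b : ℕ → G} {c : ℕ → G →L[ℝ] ℝ}

theorem isPosOp_basisProj (h : OrderBasis b c) (N : ℕ) : IsPosOp (basisProj b c N) :=
  fun x hx => (h.2.2 _).2 fun n => by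
    rw [coord_basisProj h.2.1]
    split_ifs
    exacts [(h.2.2 x).1 hx n, le_rfl]

theorem isPosOp_id_sub_basisProj (h : OrderBasis b c) (N : ℕ) :
    IsPosOp (ContinuousLinearMap.id ℝ G - basisProj b c N) :=
  fun x hx => (h.2.2 _).2 fun n => by
    simp only [sub_apply, ContinuousLinearMap.id_apply, map_sub, coord_basisProj h.2.1]
    split_ifs
    · simp
    · simpa using (h.2.2 x).1 hx n

theorem opNorm_basisProj_le_one (h : OrderBasis b c) (N : ℕ) : ‖basisProj b c N‖ ≤ 1 :=
  opNorm_le_one_of_isPosOp (h.isPosOp_basisProj N) (h.isPosOp_id_sub_basisProj N)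

theorem exists_forall_norm_sub_basisProj_lt (h : OrderBasis b c) {K : Set G} (hK : IsCompact K)
    {ε : ℝ} (hε : 0 < ε) : ∃ N, ∀ x ∈ K, ‖x - basisProj b c N x‖ < ε := by
  have hLip (N : ℕ) : LipschitzWith 1 (basisProj b c N) :=
    ContinuousLinearMap.lipschitzWith_of_opNorm_le <| by simpa using h.opNorm_basisProj_le_one N
  have hunif : TendstoUniformlyOn (fun N => basisProj b c N) id atTop K :=
    (LipschitzWith.uniformEquicontinuous _ 1 hLip).equicontinuous.tendstoUniformlyOn_of_tendsto
      (fun x => by simpa using h.1 x) hK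
  obtain ⟨N, hN⟩ := (Metric.tendstoUniformlyOn_iff.1 hunif ε hε).exists
  exact ⟨N, fun x hx => by simpa [dist_eq_norm] using hN x hx⟩

end OrderBasis

theorem approx_id_by_positive_compact_general {G : Type*}
    [NormedAddCommGroup G] [Lattice G] [IsOrderedAddMonoid G] [HasSolidNorm G] [NormedSpace ℝ G]
    (b : ℕ → G) (c : ℕ → G →L[ℝ] ℝ) (hbc : OrderBasis b c)
    (K : Set G) (hK : IsCompact K) (ε : ℝ) (hε : 0 < ε) :
    ∃ S m : G →L[ℝ] G, IsCompactOperator S ∧ IsPosOp S ∧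
      IsPosOp (ContinuousLinearMap.id ℝ G - S) ∧ ‖S‖ ≤ 1 ∧
      IsModulus (S - ContinuousLinearMap.id ℝ G) m ∧ ∀ x ∈ K, ‖m x‖ < ε := by
  obtain ⟨N, hN⟩ := hbc.exists_forall_norm_sub_basisProj_lt hK hε
  have hpos := hbc.isPosOp_basisProj N
  have hpos' := hbc.isPosOp_id_sub_basisProj N
  refine ⟨basisProj b c N, ContinuousLinearMap.id ℝ G - basisProj b c N,
    isCompactOperator_basisProj b c N, hpos, hpos', hbc.opNorm_basisProj_le_one N, ?_,
    fun x hx => by simpa using hN x hx⟩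
  simpa using isModulus_neg_of_isPosOp_neg (T := basisProj b c N - ContinuousLinearMap.id ℝ G)
    (by simpa using hpos')

/-- In a Banach lattice with order continuous norm whose order is given by a basis, the
identity can be approximated on compact sets by positive compact operators `S ≤ id` with
regular norm at most `1`. -/
theorem approx_id_by_positive_compact {G : Type*}
    [NormedAddCommGroup G] [Lattice G] [IsOrderedAddMonoid G] [HasSolidNorm G] [NormedSpace ℝ G] [CompleteSpace G]
    (hoc : OrderContNorm G)
    (b : ℕ → G) (c : ℕ → G →L[ℝ] ℝ) (hbc : OrderBasis b c)
    (K : Set G) (hK : IsCompact K) (ε : ℝ) (hε : 0 < ε) :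
    ∃ S m : G →L[ℝ] G, IsCompactOperator S ∧ IsPosOp S ∧
      IsPosOp (ContinuousLinearMap.id ℝ G - S) ∧ ‖S‖ ≤ 1 ∧
      IsModulus (S - ContinuousLinearMap.id ℝ G) m ∧ ∀ x ∈ K, ‖m x‖ < ε :=
  approx_id_by_positive_compact_general b c hbc K hK ε hε
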